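/- Let u, v : [0,∞) → ℝ^J be two solutions of the Lorenz 96 equation with ‖u(t)‖ ≤ ρ and ‖v(t)‖ ≤ ρ for all t ≥ 0, where ρ = √(2J)·|F|, let δ(t) = v(t) − u(t), assume β > 0 is such that ‖δ(t)‖² ≤ ‖δ(0)‖²·e^{2βt} for all t ≥ 0, and assume c > 0 is such that ⟨2B(a,b) + B(b,b), b⟩ ≤ c·‖a‖·‖b‖·‖Πb‖ for all a, b ∈ ℝ^J. Then for all t ≥ 0, ‖δ(t)‖² ≤ b₁(t)·‖δ(0)‖² + b₂(t)·‖Πδ(0)‖², where b₁(t) = (16c²ρ⁴/β)·[ (1/(2β+1))·(e^{2βt} − e^{−t}) − (1 − e^{−t}) ] + e^{−t} and b₂(t) = c²ρ²·(1 − e^{−t}). -/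

import Mathlib

/-- The Lorenz 96 vector field on `ℝ^J` with external forcing `F`,
with coordinates indexed cyclically modulo `J`. -/
noncomputable def lorenz96 (J : ℕ) [NeZero J] (F : ℝ)
    (u : EuclideanSpace ℝ (Fin J)) : EuclideanSpace ℝ (Fin J) :=
  WithLp.toLp 2 (fun j => (u (j + 1) - u (j - 2)) * u (j - 1) - u j + F)

/-- The symmetric bilinear map of the Lorenz 96 model, with coordinates
indexed cyclically modulo `J`. -/
noncomputable def lorenz96B (J : ℕ) [NeZero J]
    (u v : EuclideanSpace ℝ (Fin J)) : EuclideanSpace ℝ (Fin J) :=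
  WithLp.toLp 2 (fun j => (1 / 2) * (v (j - 1) * u (j + 1) + u (j - 1) * v (j + 1)
    - v (j - 2) * u (j - 1) - u (j - 2) * v (j - 1)))

/-- The orthogonal projection of `ℝ^J` that keeps the coordinates whose
(1-based) index is not divisible by 3 and zeroes out every coordinate whose
(1-based) index is divisible by 3. -/
noncomputable def lorenz96Proj (J : ℕ)
    (u : EuclideanSpace ℝ (Fin J)) : EuclideanSpace ℝ (Fin J) :=
  WithLp.toLp 2 (fun j => if ((j : ℕ) + 1) % 3 = 0 then 0 else u j)

/-!
The error `δ = v - u` solves `δ' = W - δ` with `W = 2 B(u, δ) + B(δ, δ)`, and `‖W‖ ≤ 8ρ‖δ‖`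
since `‖B(a, b)‖ ≤ 2‖a‖‖b‖` and `‖δ‖ ≤ 2ρ`. As `Π` is a contraction,
`d/dt ‖Πδ‖² = 2⟪Πδ, ΠW⟫ - 2‖Πδ‖² ≤ ‖W‖² / 2`, so the assumed exponential growth of `‖δ‖` gives
`‖Πδ(t)‖² ≤ ‖Πδ(0)‖² + (16ρ²/β)(e^{2βt} - 1)‖δ(0)‖²`. The hypothesis on `B` turns the energy
identity into `d/dt (eᵗ‖δ‖²) = eᵗ (2⟪W, δ⟫ - ‖δ‖²) ≤ eᵗ c²ρ² ‖Πδ‖²`, and integrating the bound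
on `‖Πδ‖²` against `eᵗ` yields the claim.
-/

open Real
open scoped RealInnerProductSpace

theorem le_of_hasDerivAt_le_of_nonneg {f g f' g' : ℝ → ℝ}
    (hf : ∀ t, 0 ≤ t → HasDerivAt f (f' t) t) (hg : ∀ t, 0 ≤ t → HasDerivAt g (g' t) t)
    (h0 : f 0 ≤ g 0) (hle : ∀ t, 0 ≤ t → f' t ≤ g' t) (t : ℝ) (ht : 0 ≤ t) : f t ≤ g t :=
  image_le_of_deriv_right_le_deriv_boundary
    (fun s hs => (hf s hs.1).continuousAt.continuousWithinAt)
    (fun s hs => (hf s hs.1).hasDerivWithinAt) h0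
    (fun s hs => (hg s hs.1).continuousAt.continuousWithinAt)
    (fun s hs => (hg s hs.1).hasDerivWithinAt) (fun s hs => hle s hs.1) ⟨ht, le_rfl⟩

section DampedError

variable {E : Type*} [NormedAddCommGroup E] [InnerProductSpace ℝ E] {δ W : ℝ → E} {β : ℝ}

theorem two_inner_map_map_sub_le {P : E →L[ℝ] E} (hP : ∀ x, ‖P x‖ ≤ ‖x‖) (w x : E) :
    2 * ⟪P x, P (w - x)⟫ ≤ ‖w‖ ^ 2 / 2 := by
  have hw : ⟪P x, P w⟫ ≤ ‖P x‖ * ‖w‖ :=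
    (real_inner_le_norm _ _).trans (mul_le_mul_of_nonneg_left (hP w) (norm_nonneg _))
  rw [map_sub, inner_sub_right, real_inner_self_eq_norm_sq]
  nlinarith [sq_nonneg (‖w‖ - 2 * ‖P x‖)]

theorem norm_sq_map_le_of_hasDerivAt {P : E →L[ℝ] E} (hP : ∀ x, ‖P x‖ ≤ ‖x‖) {K : ℝ}
    (hβ : β ≠ 0) (hδ : ∀ s, 0 ≤ s → HasDerivAt δ (W s - δ s) s)
    (hW : ∀ s, 0 ≤ s → ‖W s‖ ≤ K * ‖δ s‖)
    (hgrow : ∀ s, 0 ≤ s → ‖δ s‖ ^ 2 ≤ ‖δ 0‖ ^ 2 * exp (2 * β * s)) (t : ℝ) (ht : 0 ≤ t) :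
    ‖P (δ t)‖ ^ 2
      ≤ ‖P (δ 0)‖ ^ 2 + K ^ 2 / (4 * β) * ‖δ 0‖ ^ 2 * (exp (2 * β * t) - 1) := by
  refine le_of_hasDerivAt_le_of_nonneg
    (fun s hs => (P.hasFDerivAt.comp_hasDerivAt s (hδ s hs)).norm_sq)
    (g := fun s => ‖P (δ 0)‖ ^ 2 + K ^ 2 / (4 * β) * ‖δ 0‖ ^ 2 * (exp (2 * β * s) - 1))
    (g' := fun s => K ^ 2 / 2 * exp (2 * β * s) * ‖δ 0‖ ^ 2) (fun s _ => ?_) (by simp)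
    (fun s hs => ?_) t ht
  · refine ((((hasDerivAt_id' (x := s)).const_mul (2 * β)).exp.sub_const 1).const_mul
      (K ^ 2 / (4 * β) * ‖δ 0‖ ^ 2)).const_add (‖P (δ 0)‖ ^ 2) |>.congr_deriv ?_
    field_simp
    ring
  · calc 2 * ⟪P (δ s), P (W s - δ s)⟫ ≤ ‖W s‖ ^ 2 / 2 := two_inner_map_map_sub_le hP _ _
      _ ≤ (K * ‖δ s‖) ^ 2 / 2 := by gcongr; exact hW s hs
      _ ≤ K ^ 2 / 2 * exp (2 * β * s) * ‖δ 0‖ ^ 2 := by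
        rw [mul_pow]; nlinarith [hgrow s hs, sq_nonneg K]

theorem norm_sq_add_two_inner_sub_le {w x : E} {M q : ℝ} (h : ⟪w, x⟫ ≤ M * ‖x‖ * q) :
    ‖x‖ ^ 2 + 2 * ⟪x, w - x⟫ ≤ M ^ 2 * q ^ 2 := by
  rw [inner_sub_right, real_inner_self_eq_norm_sq, real_inner_comm]
  nlinarith [sq_nonneg (M * q - ‖x‖)]

theorem exp_mul_norm_sq_le_of_hasDerivAt {p : ℝ → ℝ} {M a b : ℝ} (hβ : 2 * β + 1 ≠ 0)
    (hδ : ∀ s, 0 ≤ s → HasDerivAt δ (W s - δ s) s)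
    (hW : ∀ s, 0 ≤ s → ⟪W s, δ s⟫ ≤ M * ‖δ s‖ * p s)
    (hp : ∀ s, 0 ≤ s → p s ^ 2 ≤ a + b * (exp (2 * β * s) - 1)) (t : ℝ) (ht : 0 ≤ t) :
    exp t * ‖δ t‖ ^ 2 ≤ ‖δ 0‖ ^ 2
      + M ^ 2 * ((a - b) * (exp t - 1) + b * (exp ((2 * β + 1) * t) - 1) / (2 * β + 1)) := by
  refine le_of_hasDerivAt_le_of_nonneg (fun s hs => (hasDerivAt_exp s).mul (hδ s hs).norm_sq)
    (g := fun s => ‖δ 0‖ ^ 2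
      + M ^ 2 * ((a - b) * (exp s - 1) + b * (exp ((2 * β + 1) * s) - 1) / (2 * β + 1)))
    (g' := fun s => M ^ 2 * ((a - b) * exp s + b * exp ((2 * β + 1) * s))) (fun s _ => ?_)
    (by simp) (fun s hs => ?_) t ht
  · refine ((((hasDerivAt_exp s).sub_const 1).const_mul (a - b)).add
      ((((hasDerivAt_id' (x := s)).const_mul (2 * β + 1)).exp.sub_const 1).const_mul b
        |>.div_const (2 * β + 1))).const_mul (M ^ 2) |>.const_add (‖δ 0‖ ^ 2) |>.congr_deriv ?_
    field_simp
  · have hexp : exp ((2 * β + 1) * s) = exp s * exp (2 * β * s) := by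
      rw [← exp_add]; ring_nf
    calc exp s * ‖δ s‖ ^ 2 + exp s * (2 * ⟪δ s, W s - δ s⟫)
        = exp s * (‖δ s‖ ^ 2 + 2 * ⟪δ s, W s - δ s⟫) := by ring
      _ ≤ exp s * (M ^ 2 * (a + b * (exp (2 * β * s) - 1))) := by
        gcongr
        exact (norm_sq_add_two_inner_sub_le (hW s hs)).trans
          (mul_le_mul_of_nonneg_left (hp s hs) (sq_nonneg M))
      _ = M ^ 2 * ((a - b) * exp s + b * exp ((2 * β + 1) * s)) := by rw [hexp]; ring

theorem norm_sq_le_of_hasDerivAt {p : ℝ → ℝ} {M a b : ℝ} (hβ : 2 * β + 1 ≠ 0)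
    (hδ : ∀ s, 0 ≤ s → HasDerivAt δ (W s - δ s) s)
    (hW : ∀ s, 0 ≤ s → ⟪W s, δ s⟫ ≤ M * ‖δ s‖ * p s)
    (hp : ∀ s, 0 ≤ s → p s ^ 2 ≤ a + b * (exp (2 * β * s) - 1)) (t : ℝ) (ht : 0 ≤ t) :
    ‖δ t‖ ^ 2 ≤ exp (-t) * ‖δ 0‖ ^ 2 + M ^ 2 * a * (1 - exp (-t))
      + M ^ 2 * b * ((exp (2 * β * t) - exp (-t)) / (2 * β + 1) - (1 - exp (-t))) := by
  have hexp : exp ((2 * β + 1) * t) = exp t * exp (2 * β * t) := by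
    rw [← exp_add]; ring_nf
  have key := exp_mul_norm_sq_le_of_hasDerivAt hβ hδ hW hp t ht
  rw [hexp, ← le_div_iff₀' (exp_pos t)] at key
  refine key.trans_eq ?_
  rw [exp_neg]
  field_simp
  ring

end DampedError

theorem norm_toLp_mul_comp_le {ι : Type*} [Fintype ι] (a b : EuclideanSpace ℝ ι) (σ : ι → ι)
    (τ : ι ≃ ι) : ‖WithLp.toLp 2 (fun j => a (σ j) * b (τ j))‖ ≤ ‖a‖ * ‖b‖ := by
  rw [← sq_le_sq₀ (norm_nonneg _) (by positivity), mul_pow, EuclideanSpace.norm_sq_eq,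
    EuclideanSpace.norm_sq_eq b, Finset.mul_sum,
    ← Equiv.sum_comp τ (fun i => ‖a‖ ^ 2 * ‖b i‖ ^ 2)]
  refine Finset.sum_le_sum fun j _ => ?_
  simp only [norm_mul, mul_pow]
  gcongr
  exact PiLp.norm_apply_le a (σ j)

section Lorenz96

variable {J : ℕ} [NeZero J]

theorem lorenz96_sub_lorenz96 (F : ℝ) (a b : EuclideanSpace ℝ (Fin J)) :
    lorenz96 J F b - lorenz96 J F a
      = (2 • lorenz96B J a (b - a) + lorenz96B J (b - a) (b - a)) - (b - a) := by
  ext j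
  simp only [lorenz96, lorenz96B, PiLp.sub_apply, PiLp.add_apply, two_smul]
  ring

theorem norm_lorenz96B_le (a b : EuclideanSpace ℝ (Fin J)) :
    ‖lorenz96B J a b‖ ≤ 2 * ‖a‖ * ‖b‖ := by
  let X (σ : Fin J → Fin J) (τ : Fin J ≃ Fin J) : EuclideanSpace ℝ (Fin J) :=
    WithLp.toLp 2 (fun j => a (σ j) * b (τ j))
  have hB : lorenz96B J a b = (1 / 2 : ℝ) • (X (· + 1) (Equiv.subRight 1)
      + X (· - 1) (Equiv.addRight 1) - X (· - 1) (Equiv.subRight 2)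
      - X (· - 2) (Equiv.subRight 1)) := by
    ext j
    simp only [lorenz96B, X, PiLp.toLp_apply, PiLp.smul_apply, PiLp.sub_apply, PiLp.add_apply,
      Equiv.subRight_apply, Equiv.coe_addRight, smul_eq_mul]
    ring
  have hX := norm_toLp_mul_comp_le a b
  have hsum := norm_sub_le_of_le (norm_sub_le_of_le (norm_add_le_of_le (hX (· + 1)
    (Equiv.subRight 1)) (hX (· - 1) (Equiv.addRight 1))) (hX (· - 1) (Equiv.subRight 2)))
    (hX (· - 2) (Equiv.subRight 1))
  rw [hB, norm_smul, Real.norm_of_nonneg (by norm_num)]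
  linarith

theorem norm_two_smul_lorenz96B_add_le (a b : EuclideanSpace ℝ (Fin J)) :
    ‖2 • lorenz96B J a b + lorenz96B J b b‖ ≤ (4 * ‖a‖ + 2 * ‖b‖) * ‖b‖ := by
  calc ‖2 • lorenz96B J a b + lorenz96B J b b‖
      ≤ 2 * ‖lorenz96B J a b‖ + ‖lorenz96B J b b‖ := by
        grw [norm_add_le, norm_nsmul_le, Nat.cast_ofNat]
    _ ≤ 2 * (2 * ‖a‖ * ‖b‖) + 2 * ‖b‖ * ‖b‖ := by
        grw [norm_lorenz96B_le, norm_lorenz96B_le]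
    _ = (4 * ‖a‖ + 2 * ‖b‖) * ‖b‖ := by ring

end Lorenz96

noncomputable def lorenz96ProjCLM (J : ℕ) :
    EuclideanSpace ℝ (Fin J) →L[ℝ] EuclideanSpace ℝ (Fin J) :=
  LinearMap.toContinuousLinearMap
    { toFun := lorenz96Proj J
      map_add' x y := by
        ext j
        simp only [lorenz96Proj, PiLp.add_apply, PiLp.toLp_apply]
        split_ifs <;> simp
      map_smul' r x := by
        ext j
        simp only [lorenz96Proj, PiLp.smul_apply, PiLp.toLp_apply, RingHom.id_apply, smul_eq_mul]
        split_ifs <;> simp }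

theorem lorenz96ProjCLM_apply (J : ℕ) (x : EuclideanSpace ℝ (Fin J)) :
    lorenz96ProjCLM J x = lorenz96Proj J x := rfl

theorem norm_lorenz96Proj_le (J : ℕ) (x : EuclideanSpace ℝ (Fin J)) :
    ‖lorenz96Proj J x‖ ≤ ‖x‖ := by
  rw [← sq_le_sq₀ (norm_nonneg _) (norm_nonneg _), EuclideanSpace.norm_sq_eq,
    EuclideanSpace.norm_sq_eq]
  refine Finset.sum_le_sum fun j _ => ?_
  simp only [lorenz96Proj, PiLp.toLp_apply]
  split_ifs <;> simp [sq_nonneg]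

theorem lorenz96_err_sq_bound_general (J : ℕ) [NeZero J]
    (F : ℝ) (β : ℝ) (hβ : 0 < β)
    (c : ℝ) (hc : 0 < c)
    (hB : ∀ a b : EuclideanSpace ℝ (Fin J),
      inner (𝕜 := ℝ) (2 • lorenz96B J a b + lorenz96B J b b) b
        ≤ c * ‖a‖ * ‖b‖ * ‖lorenz96Proj J b‖)
    (u v : ℝ → EuclideanSpace ℝ (Fin J))
    (hu : ∀ t : ℝ, 0 ≤ t → HasDerivAt u (lorenz96 J F (u t)) t)
    (hv : ∀ t : ℝ, 0 ≤ t → HasDerivAt v (lorenz96 J F (v t)) t)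
    (hubd : ∀ t : ℝ, 0 ≤ t → ‖u t‖ ≤ Real.sqrt (2 * J) * |F|)
    (hvbd : ∀ t : ℝ, 0 ≤ t → ‖v t‖ ≤ Real.sqrt (2 * J) * |F|)
    (hgrow : ∀ t : ℝ, 0 ≤ t →
      ‖v t - u t‖ ^ 2 ≤ ‖v 0 - u 0‖ ^ 2 * Real.exp (2 * β * t)) :
    ∀ t : ℝ, 0 ≤ t →
      ‖v t - u t‖ ^ 2
        ≤ ((16 * c ^ 2 * (Real.sqrt (2 * J) * |F|) ^ 4 / β)
              * ((1 / (2 * β + 1)) * (Real.exp (2 * β * t) - Real.exp (-t))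
                  - (1 - Real.exp (-t)))
            + Real.exp (-t)) * ‖v 0 - u 0‖ ^ 2
          + (c ^ 2 * (Real.sqrt (2 * J) * |F|) ^ 2 * (1 - Real.exp (-t)))
            * ‖lorenz96Proj J (v 0 - u 0)‖ ^ 2 := by
  intro t ht
  set ρ := √(2 * J) * |F|
  have hδ (s : ℝ) (hs : 0 ≤ s) : HasDerivAt (fun r => v r - u r)
      ((2 • lorenz96B J (u s) (v s - u s) + lorenz96B J (v s - u s) (v s - u s))
        - (v s - u s)) s := by
    have h := (hv s hs).sub (hu s hs)
    rwa [lorenz96_sub_lorenz96] at h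
  have hW (s : ℝ) (hs : 0 ≤ s) :
      ‖2 • lorenz96B J (u s) (v s - u s) + lorenz96B J (v s - u s) (v s - u s)‖
        ≤ 8 * ρ * ‖v s - u s‖ := by
    grw [norm_two_smul_lorenz96B_add_le, hubd s hs, norm_sub_le_of_le (hvbd s hs) (hubd s hs)]
    linarith
  have hWδ (s : ℝ) (hs : 0 ≤ s) :
      ⟪2 • lorenz96B J (u s) (v s - u s) + lorenz96B J (v s - u s) (v s - u s), v s - u s⟫
        ≤ c * ρ * ‖v s - u s‖ * ‖lorenz96ProjCLM J (v s - u s)‖ := by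
    grw [hB, hubd s hs, lorenz96ProjCLM_apply]
  have hproj := norm_sq_map_le_of_hasDerivAt (P := lorenz96ProjCLM J) (norm_lorenz96Proj_le J)
    hβ.ne' hδ hW hgrow
  have := norm_sq_le_of_hasDerivAt (β := β) (by linarith) hδ hWδ hproj t ht
  simp only [lorenz96ProjCLM_apply] at this
  refine this.trans_eq ?_
  ring

theorem lorenz96_err_sq_bound (J J' : ℕ) [NeZero J]
    (hJ3 : J = 3 * J') (hJ4 : 4 ≤ J) (F : ℝ) (β : ℝ) (hβ : 0 < β)
    (c : ℝ) (hc : 0 < c)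
    (hB : ∀ a b : EuclideanSpace ℝ (Fin J),
      inner (𝕜 := ℝ) (2 • lorenz96B J a b + lorenz96B J b b) b
        ≤ c * ‖a‖ * ‖b‖ * ‖lorenz96Proj J b‖)
    (u v : ℝ → EuclideanSpace ℝ (Fin J))
    (hu : ∀ t : ℝ, 0 ≤ t → HasDerivAt u (lorenz96 J F (u t)) t)
    (hv : ∀ t : ℝ, 0 ≤ t → HasDerivAt v (lorenz96 J F (v t)) t)
    (hubd : ∀ t : ℝ, 0 ≤ t → ‖u t‖ ≤ Real.sqrt (2 * J) * |F|)
    (hvbd : ∀ t : ℝ, 0 ≤ t → ‖v t‖ ≤ Real.sqrt (2 * J) * |F|)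
    (hgrow : ∀ t : ℝ, 0 ≤ t →
      ‖v t - u t‖ ^ 2 ≤ ‖v 0 - u 0‖ ^ 2 * Real.exp (2 * β * t)) :
    ∀ t : ℝ, 0 ≤ t →
      ‖v t - u t‖ ^ 2
        ≤ ((16 * c ^ 2 * (Real.sqrt (2 * J) * |F|) ^ 4 / β)
              * ((1 / (2 * β + 1)) * (Real.exp (2 * β * t) - Real.exp (-t))
                  - (1 - Real.exp (-t)))
            + Real.exp (-t)) * ‖v 0 - u 0‖ ^ 2
          + (c ^ 2 * (Real.sqrt (2 * J) * |F|) ^ 2 * (1 - Real.exp (-t)))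
            * ‖lorenz96Proj J (v 0 - u 0)‖ ^ 2 :=
  lorenz96_err_sq_bound_general J F β hβ c hc hB u v hu hv hubd hvbd hgrow
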